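/- On the open set U ⊆ ℝ^N × ℝ^M consisting of all points (x, y) with x_l ≠ y_s for all 1 ≤ l ≤ N, 1 ≤ s ≤ M and y_m ≠ y_s for all m ≠ s, the wave function Ψ is an eigenfunction of the total momentum operator: (1/i)·(Σ_{n=1}^{N} ∂Ψ/∂x_n + Σ_{m=1}^{M} ∂Ψ/∂y_m) = (Σ_{j=1}^{N+M} k_j)·Ψ at every point of U. -/

import Mathlib

open Complex Finset Function

/-- The factor `A_j(Λ, t) = i(k_j − Λ) + c·sgn(t)`. -/
noncomputable def Acoef (c kj lam t : ℝ) : ℂ :=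
  Complex.I * ((kj : ℂ) - (lam : ℂ)) + (c : ℂ) * ((Real.sign t : ℝ) : ℂ)

/-- The (N+M)×(N+M) matrix whose determinant is `Φ_R(x, y)`. -/
noncomputable def PhiMat (N M : ℕ) (c : ℝ) (k : Fin (N + M) → ℝ) (Λ : Fin M → ℝ)
    (R : Equiv.Perm (Fin M)) (x : Fin N → ℝ) (y : Fin M → ℝ) :
    Matrix (Fin (N + M)) (Fin (N + M)) ℂ :=
  fun j col =>
    match finSumFinEquiv.symm col with
    | Sum.inl l =>
        (∏ s : Fin M, Acoef c (k j) (Λ (R s)) (x l - y s)) *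
          Complex.exp (Complex.I * ((k j : ℂ)) * ((x l : ℝ) : ℂ))
    | Sum.inr m =>
        (∏ s ∈ Finset.univ.erase m, Acoef c (k j) (Λ (R s)) (y m - y s)) *
          Complex.exp (Complex.I * ((k j : ℂ)) * ((y m : ℝ) : ℂ))

/-- The determinantal Bethe-ansatz wave function `Ψ(x, y)`. -/
noncomputable def Psi (N M : ℕ) (c : ℝ) (k : Fin (N + M) → ℝ) (Λ : Fin M → ℝ)
    (x : Fin N → ℝ) (y : Fin M → ℝ) : ℂ :=
  ∑ R : Equiv.Perm (Fin M),
    ((Equiv.Perm.sign R : ℤ) : ℂ) *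
      (∏ p ∈ Finset.univ.filter (fun p : Fin M × Fin M => p.1 < p.2),
        (Complex.I * ((Λ (R p.1) : ℂ) - (Λ (R p.2) : ℂ)) +
          2 * (c : ℂ) * ((Real.sign (y p.2 - y p.1) : ℝ) : ℂ))) *
      (PhiMat N M c k Λ R x y).det

/-! ### Auxiliary (frozen-sign) versions -/

/-- `Acoef` with the sign replaced by an arbitrary constant. -/
noncomputable def AcoefC (c kj lam σ : ℝ) : ℂ :=
  Complex.I * ((kj : ℂ) - (lam : ℂ)) + (c : ℂ) * ((σ : ℝ) : ℂ)

/-- Frozen-sign version of `PhiMat`. -/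
noncomputable def PhiMatF (N M : ℕ) (c : ℝ) (k : Fin (N + M) → ℝ) (Λ : Fin M → ℝ)
    (R : Equiv.Perm (Fin M)) (sXY : Fin N → Fin M → ℝ) (sYY : Fin M → Fin M → ℝ)
    (x : Fin N → ℝ) (y : Fin M → ℝ) :
    Matrix (Fin (N + M)) (Fin (N + M)) ℂ :=
  fun j col =>
    match finSumFinEquiv.symm col with
    | Sum.inl l =>
        (∏ s : Fin M, AcoefC c (k j) (Λ (R s)) (sXY l s)) *
          Complex.exp (Complex.I * ((k j : ℂ)) * ((x l : ℝ) : ℂ))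
    | Sum.inr m =>
        (∏ s ∈ Finset.univ.erase m, AcoefC c (k j) (Λ (R s)) (sYY m s)) *
          Complex.exp (Complex.I * ((k j : ℂ)) * ((y m : ℝ) : ℂ))

/-- Frozen-sign version of `Psi`. -/
noncomputable def PsiF (N M : ℕ) (c : ℝ) (k : Fin (N + M) → ℝ) (Λ : Fin M → ℝ)
    (sXY : Fin N → Fin M → ℝ) (sYY : Fin M → Fin M → ℝ)
    (x : Fin N → ℝ) (y : Fin M → ℝ) : ℂ :=
  ∑ R : Equiv.Perm (Fin M),
    ((Equiv.Perm.sign R : ℤ) : ℂ) *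
      (∏ p ∈ Finset.univ.filter (fun p : Fin M × Fin M => p.1 < p.2),
        (Complex.I * ((Λ (R p.1) : ℂ) - (Λ (R p.2) : ℂ)) +
          2 * (c : ℂ) * ((sYY p.2 p.1 : ℝ) : ℂ))) *
      (PhiMatF N M c k Λ R sXY sYY x y).det

lemma Psi_eq_PsiF (N M : ℕ) (c : ℝ) (k : Fin (N + M) → ℝ) (Λ : Fin M → ℝ)
    (x : Fin N → ℝ) (y : Fin M → ℝ) :
    Psi N M c k Λ x y =
      PsiF N M c k Λ (fun l s => Real.sign (x l - y s))
        (fun m s => Real.sign (y m - y s)) x y := rfl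

lemma PsiF_congr (N M : ℕ) (c : ℝ) (k : Fin (N + M) → ℝ) (Λ : Fin M → ℝ)
    {sXY sXY' : Fin N → Fin M → ℝ} {sYY sYY' : Fin M → Fin M → ℝ}
    (hXY : ∀ l s, sXY l s = sXY' l s)
    (hYY : ∀ m s, m ≠ s → sYY m s = sYY' m s)
    (x : Fin N → ℝ) (y : Fin M → ℝ) :
    PsiF N M c k Λ sXY sYY x y = PsiF N M c k Λ sXY' sYY' x y := by
  unfold PsiF
  refine Finset.sum_congr rfl fun R _ => ?_
  have hmat : PhiMatF N M c k Λ R sXY sYY x y = PhiMatF N M c k Λ R sXY' sYY' x y := by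
    funext j col
    unfold PhiMatF
    cases h : finSumFinEquiv.symm col with
    | inl l =>
      simp only [h, hXY]
    | inr m =>
      simp only [h]
      congr 1
      refine Finset.prod_congr rfl fun s hs => ?_
      rw [hYY m s (Ne.symm (Finset.ne_of_mem_erase hs))]
  rw [hmat]
  congr 2
  refine Finset.prod_congr rfl fun p hp => ?_
  have hne : p.2 ≠ p.1 := ne_of_gt (Finset.mem_filter.mp hp).2
  rw [hYY p.2 p.1 hne]

/-- Shifting all coordinates by `t` multiplies the frozen wave function by `exp(iKt)`. -/
lemma PsiF_shift (N M : ℕ) (c : ℝ) (k : Fin (N + M) → ℝ) (Λ : Fin M → ℝ)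
    (sXY : Fin N → Fin M → ℝ) (sYY : Fin M → Fin M → ℝ)
    (x : Fin N → ℝ) (y : Fin M → ℝ) (t : ℝ) :
    PsiF N M c k Λ sXY sYY (fun l => x l + t) (fun m => y m + t) =
      Complex.exp (Complex.I * (∑ j : Fin (N + M), (k j : ℂ)) * (t : ℂ)) *
        PsiF N M c k Λ sXY sYY x y := by
  unfold PsiF
  rw [Finset.mul_sum]
  refine Finset.sum_congr rfl fun R _ => ?_
  have hdet : (PhiMatF N M c k Λ R sXY sYY (fun l => x l + t) (fun m => y m + t)).det =
      Complex.exp (Complex.I * (∑ j : Fin (N + M), (k j : ℂ)) * (t : ℂ)) *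
        (PhiMatF N M c k Λ R sXY sYY x y).det := by
    have hmat : PhiMatF N M c k Λ R sXY sYY (fun l => x l + t) (fun m => y m + t) =
        Matrix.of fun j col => Complex.exp (Complex.I * (k j : ℂ) * (t : ℂ)) *
          PhiMatF N M c k Λ R sXY sYY x y j col := by
      funext j col
      unfold PhiMatF
      cases h : finSumFinEquiv.symm col with
      | inl l =>
        simp only [Matrix.of_apply, h]
        rw [show ((x l + t : ℝ) : ℂ) = (x l : ℂ) + (t : ℂ) by push_cast; ring]
        rw [mul_add, Complex.exp_add]
        ring
      | inr m =>
        simp only [Matrix.of_apply, h]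
        rw [show ((y m + t : ℝ) : ℂ) = (y m : ℂ) + (t : ℂ) by push_cast; ring]
        rw [mul_add, Complex.exp_add]
        ring
    rw [hmat, Matrix.det_mul_column]
    congr 1
    rw [← Complex.exp_sum]
    congr 1
    rw [Finset.mul_sum, Finset.sum_mul]
  rw [hdet]; ring

lemma differentiable_finset_prod' {E : Type*} [NormedAddCommGroup E] [NormedSpace ℝ E]
    {ι : Type*} [DecidableEq ι] (u : Finset ι) (f : ι → E → ℂ)
    (h : ∀ i ∈ u, Differentiable ℝ (f i)) :
    Differentiable ℝ (fun p => ∏ i ∈ u, f i p) := by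
  induction u using Finset.induction with
  | empty => simpa using differentiable_const (1 : ℂ)
  | @insert a u ha ih =>
    simp only [Finset.prod_insert ha]
    exact (h a (Finset.mem_insert_self a u)).mul
      (ih fun i hi => h i (Finset.mem_insert_of_mem hi))

/-- The frozen wave function is differentiable jointly in `(x, y)`. -/
lemma PsiF_differentiable (N M : ℕ) (c : ℝ) (k : Fin (N + M) → ℝ) (Λ : Fin M → ℝ)
    (sXY : Fin N → Fin M → ℝ) (sYY : Fin M → Fin M → ℝ) :
    Differentiable ℝ (fun p : (Fin N → ℝ) × (Fin M → ℝ) =>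
      PsiF N M c k Λ sXY sYY p.1 p.2) := by
  unfold PsiF
  apply Differentiable.fun_sum
  intro R _
  apply Differentiable.const_mul
  have : (fun p : (Fin N → ℝ) × (Fin M → ℝ) =>
      (PhiMatF N M c k Λ R sXY sYY p.1 p.2).det) =
      fun p => ∑ σ : Equiv.Perm (Fin (N + M)),
        ((Equiv.Perm.sign σ : ℤ) : ℂ) *
          ∏ j, PhiMatF N M c k Λ R sXY sYY p.1 p.2 (σ j) j := by
    funext p
    rw [Matrix.det_apply]
    refine Finset.sum_congr rfl fun σ _ => ?_
    rw [Units.smul_def, zsmul_eq_mul]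
  rw [this]
  apply Differentiable.fun_sum
  intro σ _
  apply Differentiable.const_mul
  apply differentiable_finset_prod'
  intro j _
  unfold PhiMatF
  cases h : finSumFinEquiv.symm j with
  | inl l =>
    simp only [h]
    apply Differentiable.const_mul
    apply Differentiable.cexp
    apply Differentiable.const_mul
    have : (fun p : (Fin N → ℝ) × (Fin M → ℝ) => ((p.1 l : ℝ) : ℂ)) =
        (Complex.ofRealCLM : ℝ →L[ℝ] ℂ) ∘ (fun p : (Fin N → ℝ) × (Fin M → ℝ) => p.1 l) := rfl
    rw [this]
    exact Complex.ofRealCLM.differentiable.comp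
      (((ContinuousLinearMap.proj l : (Fin N → ℝ) →L[ℝ] ℝ).comp
        (ContinuousLinearMap.fst ℝ (Fin N → ℝ) (Fin M → ℝ))).differentiable)
  | inr m =>
    simp only [h]
    apply Differentiable.const_mul
    apply Differentiable.cexp
    apply Differentiable.const_mul
    have : (fun p : (Fin N → ℝ) × (Fin M → ℝ) => ((p.2 m : ℝ) : ℂ)) =
        (Complex.ofRealCLM : ℝ →L[ℝ] ℂ) ∘ (fun p : (Fin N → ℝ) × (Fin M → ℝ) => p.2 m) := rfl
    rw [this]
    exact Complex.ofRealCLM.differentiable.comp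
      (((ContinuousLinearMap.proj m : (Fin M → ℝ) →L[ℝ] ℝ).comp
        (ContinuousLinearMap.snd ℝ (Fin N → ℝ) (Fin M → ℝ))).differentiable)

/-- `Real.sign` is locally constant away from `0`. -/
lemma sign_eventuallyEq {a : ℝ} (ha : a ≠ 0) :
    ∀ᶠ b in nhds a, Real.sign b = Real.sign a := by
  rcases lt_or_gt_of_ne ha with h | h
  · filter_upwards [IsOpen.eventually_mem isOpen_Iio (show a ∈ Set.Iio (0:ℝ) from h)]
      with b hb
    rw [Real.sign_of_neg hb, Real.sign_of_neg h]
  · filter_upwards [IsOpen.eventually_mem isOpen_Ioi (show a ∈ Set.Ioi (0:ℝ) from h)]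
      with b hb
    rw [Real.sign_of_pos hb, Real.sign_of_pos h]

/-- On the open set `U` where no spin-down coordinate coincides with a spin-up coordinate
and the spin-up coordinates are pairwise distinct, `Ψ` is an eigenfunction of the total
momentum operator: `(1/i)·(Σ_n ∂Ψ/∂x_n + Σ_m ∂Ψ/∂y_m) = (Σ_j k_j)·Ψ`. -/
theorem psi_momentum_eigenfunction (N M : ℕ) (hM : 1 ≤ M) (c : ℝ)
    (k : Fin (N + M) → ℝ) (Λ : Fin M → ℝ) :
    ∀ x : Fin N → ℝ, ∀ y : Fin M → ℝ,
      (∀ l s, x l ≠ y s) → (∀ m s, m ≠ s → y m ≠ y s) →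
      (1 / Complex.I) *
        ((∑ n : Fin N,
            deriv (fun t : ℝ => Psi N M c k Λ (Function.update x n t) y) (x n)) +
         (∑ m : Fin M,
            deriv (fun t : ℝ => Psi N M c k Λ x (Function.update y m t)) (y m)))
        = (∑ j : Fin (N + M), ((k j : ℂ))) * Psi N M c k Λ x y := by
  intro x y hxy hyy
  classical
  set σXY : Fin N → Fin M → ℝ := fun l s => Real.sign (x l - y s) with hσXY
  set σYY : Fin M → Fin M → ℝ := fun m s => Real.sign (y m - y s) with hσYY
  set G : (Fin N → ℝ) × (Fin M → ℝ) → ℂ :=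
    fun p => PsiF N M c k Λ σXY σYY p.1 p.2 with hGdef
  have hG : Differentiable ℝ G := PsiF_differentiable N M c k Λ σXY σYY
  set K : ℂ := ∑ j : Fin (N + M), (k j : ℂ) with hK
  -- eventual equality of Psi and G near (x, y)
  have hevXY : ∀ᶠ p : (Fin N → ℝ) × (Fin M → ℝ) in nhds (x, y),
      ∀ l s, Real.sign (p.1 l - p.2 s) = σXY l s := by
    rw [Filter.eventually_all]
    intro l
    rw [Filter.eventually_all]
    intro s
    have hcont : ContinuousAt (fun p : (Fin N → ℝ) × (Fin M → ℝ) => p.1 l - p.2 s) (x, y) := by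
      fun_prop
    exact hcont.tendsto.eventually (sign_eventuallyEq (sub_ne_zero.mpr (hxy l s)))
  have hevYY : ∀ᶠ p : (Fin N → ℝ) × (Fin M → ℝ) in nhds (x, y),
      ∀ m s, m ≠ s → Real.sign (p.2 m - p.2 s) = σYY m s := by
    rw [Filter.eventually_all]
    intro m
    rw [Filter.eventually_all]
    intro s
    by_cases hms : m = s
    · exact Filter.Eventually.of_forall fun p h => absurd hms h
    · have hcont : ContinuousAt (fun p : (Fin N → ℝ) × (Fin M → ℝ) => p.2 m - p.2 s) (x, y) := by
        fun_prop
      filter_upwards [hcont.tendsto.eventually (sign_eventuallyEq (sub_ne_zero.mpr (hyy m s hms)))]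
        with p hp _
      exact hp
  have hev : (fun p : (Fin N → ℝ) × (Fin M → ℝ) => Psi N M c k Λ p.1 p.2)
      =ᶠ[nhds (x, y)] G := by
    filter_upwards [hevXY, hevYY] with p h1 h2
    rw [Psi_eq_PsiF]
    exact PsiF_congr N M c k Λ h1 h2 p.1 p.2
  have hPsiG : Psi N M c k Λ x y = G (x, y) := hev.self_of_nhds
  set D := fderiv ℝ G (x, y) with hD
  -- x-partials
  have hxpart : ∀ n : Fin N,
      deriv (fun t : ℝ => Psi N M c k Λ (Function.update x n t) y) (x n)
        = D ((Pi.single n 1 : Fin N → ℝ), (0 : Fin M → ℝ)) := by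
    intro n
    have hL : HasDerivAt (fun t : ℝ => ((Function.update x n t : Fin N → ℝ), y))
        (((Pi.single n 1 : Fin N → ℝ), (0 : Fin M → ℝ))) (x n) :=
      HasDerivAt.prodMk (hasDerivAt_update x n (x n)) (hasDerivAt_const (x n) y)
    have hfd' : HasFDerivAt G D ((Function.update x n (x n) : Fin N → ℝ), y) := by
      simp only [Function.update_eq_self]
      exact (hG (x, y)).hasFDerivAt
    have hGd : HasDerivAt (fun t : ℝ => G ((Function.update x n t : Fin N → ℝ), y))
        (D ((Pi.single n 1 : Fin N → ℝ), (0 : Fin M → ℝ))) (x n) :=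
      by have := hfd'.comp_hasDerivAt (x n) hL; exact this
    have heq : (fun t : ℝ => Psi N M c k Λ (Function.update x n t) y)
        =ᶠ[nhds (x n)] (fun t : ℝ => G ((Function.update x n t : Fin N → ℝ), y)) := by
      have htend : Filter.Tendsto (fun t : ℝ => ((Function.update x n t : Fin N → ℝ), y))
          (nhds (x n)) (nhds (x, y)) := by
        simpa [Function.update_eq_self] using hL.continuousAt.tendsto
      filter_upwards [htend.eventually hev] with t ht
      exact ht
    rw [heq.deriv_eq, hGd.deriv]
  -- y-partials
  have hypart : ∀ m : Fin M,
      deriv (fun t : ℝ => Psi N M c k Λ x (Function.update y m t)) (y m)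
        = D ((0 : Fin N → ℝ), (Pi.single m 1 : Fin M → ℝ)) := by
    intro m
    have hL : HasDerivAt (fun t : ℝ => (x, (Function.update y m t : Fin M → ℝ)))
        (((0 : Fin N → ℝ), (Pi.single m 1 : Fin M → ℝ))) (y m) :=
      HasDerivAt.prodMk (hasDerivAt_const (y m) x) (hasDerivAt_update y m (y m))
    have hfd' : HasFDerivAt G D (x, (Function.update y m (y m) : Fin M → ℝ)) := by
      simp only [Function.update_eq_self]
      exact (hG (x, y)).hasFDerivAt
    have hGd : HasDerivAt (fun t : ℝ => G (x, (Function.update y m t : Fin M → ℝ)))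
        (D ((0 : Fin N → ℝ), (Pi.single m 1 : Fin M → ℝ))) (y m) :=
      by have := hfd'.comp_hasDerivAt (y m) hL; exact this
    have heq : (fun t : ℝ => Psi N M c k Λ x (Function.update y m t))
        =ᶠ[nhds (y m)] (fun t : ℝ => G (x, (Function.update y m t : Fin M → ℝ))) := by
      have htend : Filter.Tendsto (fun t : ℝ => (x, (Function.update y m t : Fin M → ℝ)))
          (nhds (y m)) (nhds (x, y)) := by
        simpa [Function.update_eq_self] using hL.continuousAt.tendsto
      filter_upwards [htend.eventually hev] with t ht
      exact ht
    rw [heq.deriv_eq, hGd.deriv]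
  -- the diagonal derivative
  have hLdiag : HasDerivAt (fun t : ℝ => ((fun l => x l + t : Fin N → ℝ),
      (fun m => y m + t : Fin M → ℝ)))
      (((fun _ => 1 : Fin N → ℝ), (fun _ => 1 : Fin M → ℝ))) 0 := by
    apply HasDerivAt.prodMk
    · rw [hasDerivAt_pi]
      intro l
      simpa using (hasDerivAt_id (0:ℝ)).const_add (x l)
    · rw [hasDerivAt_pi]
      intro m
      simpa using (hasDerivAt_id (0:ℝ)).const_add (y m)
  have hfdd : HasFDerivAt G D ((fun l => x l + (0:ℝ) : Fin N → ℝ),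
      (fun m => y m + (0:ℝ) : Fin M → ℝ)) := by
    simp only [add_zero]
    exact (hG (x, y)).hasFDerivAt
  have hdiag : HasDerivAt (fun t : ℝ => G ((fun l => x l + t : Fin N → ℝ),
      (fun m => y m + t : Fin M → ℝ)))
      (D ((fun _ => 1 : Fin N → ℝ), (fun _ => 1 : Fin M → ℝ))) 0 :=
    by have := hfdd.comp_hasDerivAt 0 hLdiag; exact this
  have hfun : (fun t : ℝ => G ((fun l => x l + t : Fin N → ℝ),
      (fun m => y m + t : Fin M → ℝ)))
      = fun t : ℝ => Complex.exp (Complex.I * K * (t : ℂ)) * G (x, y) := by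
    funext t
    exact PsiF_shift N M c k Λ σXY σYY x y t
  have hexp : HasDerivAt (fun t : ℝ => Complex.exp (Complex.I * K * (t : ℂ)) * G (x, y))
      (Complex.I * K * G (x, y)) 0 := by
    have h1 : HasDerivAt (fun t : ℝ => ((t : ℝ) : ℂ)) 1 0 := (hasDerivAt_id (0:ℝ)).ofReal_comp
    have h2 : HasDerivAt (fun t : ℝ => Complex.I * K * ((t : ℝ) : ℂ)) (Complex.I * K) 0 := by
      simpa using h1.const_mul (Complex.I * K)
    have h3 := h2.cexp
    have h4 := h3.mul_const (G (x, y))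
    simpa using h4
  have hdiagval : D ((fun _ => 1 : Fin N → ℝ), (fun _ => 1 : Fin M → ℝ))
      = Complex.I * K * G (x, y) := by
    rw [hfun] at hdiag
    exact hdiag.unique hexp
  -- sum of directions
  have hsum : (∑ n : Fin N, D ((Pi.single n 1 : Fin N → ℝ), (0 : Fin M → ℝ)))
      + (∑ m : Fin M, D ((0 : Fin N → ℝ), (Pi.single m 1 : Fin M → ℝ)))
      = D ((fun _ => 1 : Fin N → ℝ), (fun _ => 1 : Fin M → ℝ)) := by
    rw [← map_sum, ← map_sum, ← map_add]
    congr 1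
    have e1 : (∑ n : Fin N, ((Pi.single n 1 : Fin N → ℝ), (0 : Fin M → ℝ)))
        = (((fun _ => 1 : Fin N → ℝ)), (0 : Fin M → ℝ)) := by
      rw [Prod.ext_iff, Prod.fst_sum, Prod.snd_sum]
      constructor
      · simpa using (Finset.univ_sum_single (fun _ => (1:ℝ) : Fin N → ℝ))
      · simp
    have e2 : (∑ m : Fin M, ((0 : Fin N → ℝ), (Pi.single m 1 : Fin M → ℝ)))
        = ((0 : Fin N → ℝ), ((fun _ => 1 : Fin M → ℝ))) := by
      rw [Prod.ext_iff, Prod.fst_sum, Prod.snd_sum]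
      constructor
      · simp
      · simpa using (Finset.univ_sum_single (fun _ => (1:ℝ) : Fin M → ℝ))
    rw [e1, e2, Prod.mk_add_mk, add_zero, zero_add]
  calc (1 / Complex.I) *
        ((∑ n : Fin N,
            deriv (fun t : ℝ => Psi N M c k Λ (Function.update x n t) y) (x n)) +
         (∑ m : Fin M,
            deriv (fun t : ℝ => Psi N M c k Λ x (Function.update y m t)) (y m)))
      = (1 / Complex.I) * (Complex.I * K * G (x, y)) := by
        rw [← hdiagval, ← hsum]
        congr 2
        · exact Finset.sum_congr rfl fun n _ => hxpart n
        · exact Finset.sum_congr rfl fun m _ => hypart m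
    _ = K * Psi N M c k Λ x y := by
        rw [hPsiG]
        calc (1 / Complex.I) * (Complex.I * K * G (x, y))
            = (Complex.I / Complex.I) * (K * G (x, y)) := by ring
          _ = K * G (x, y) := by rw [div_self Complex.I_ne_zero, one_mul]
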